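/- Let B be a smooth projective curve of genus g, F a very ample rank 3 vector bundle of degree d ≥ 3 on B, X = P(F) with hyperplane class H = ξ and fiber class F_0, and W ⊂ X a smooth surface with W ≡ aξ + bF_0 that is a P^1-bundle p: W → C with fiber f satisfying H·f = 1. If f·F_0 = 0 then a = 1; if f·F_0 ≥ 1 then b = -a, d = 3, and g = 0. -/

import Mathlib

theorem eq_one_and_eq_one_of_one_le_of_mul_le_one {α : Type*} [Semiring α] [PartialOrder α]
    [IsOrderedRing α] {m n : α} (hm : 1 ≤ m) (hn : 1 ≤ n) (h : m * n ≤ 1) : m = 1 ∧ n = 1 :=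
  ⟨le_antisymm ((le_mul_of_one_le_right (zero_le_one.trans hm) hn).trans h) hm,
    le_antisymm ((le_mul_of_one_le_left (zero_le_one.trans hn) hm).trans h) hn⟩

/-- Here `t = f·F₀`. With `K_X ≡ -3ξ + (2g-2+d)F₀` and `ξ·f = 1`, adjunction
`f·(K_X + W) = -2` is the hypothesis `adjunction`, and `W·f = a + b·t ≥ 0` since `f ⊄ W`. -/
theorem fiber_intersection_numerics_general (a b d g t : ℤ)
    (hd : 3 ≤ d) (hg : 0 ≤ g)
    (adjunction : a - 3 + (2 * g - 2 + d + b) * t = -2)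
    (Wf_nonneg : 0 ≤ a + b * t) :
    (t = 0 → a = 1) ∧ (1 ≤ t → b = -a ∧ d = 3 ∧ g = 0) := by
  refine ⟨by rintro rfl; linarith, fun ht ↦ ?_⟩
  have hK : 1 ≤ 2 * g - 2 + d := by linarith
  -- `W·f = 1 - (2g-2+d)·t` is nonnegative
  have hKt : (2 * g - 2 + d) * t ≤ 1 := by linear_combination adjunction + Wf_nonneg
  obtain ⟨hK1, rfl⟩ := eq_one_and_eq_one_of_one_le_of_mul_le_one hK ht hKt
  exact ⟨by linarith, by omega, by omega⟩

/-- Numerics on `X = P(F)`, `F` very ample of rank `3` and degree `d ≥ 3` on a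
smooth curve `B` of genus `g ≥ 0`, with hyperplane class `H = ξ` and fiber
class `F₀`, and a smooth surface `W ≡ aξ + bF₀` which is a `P¹`-bundle
`p : W → C` with fiber `f` such that `H·f = ξ·f = 1` and `f·F₀ = t ≥ 0`.
Adjunction (`K_X ≡ -3ξ + (2g-2+d)F₀` and `f·K_W = f·(K_X + W) = -2`, using
`ξ·f = 1`) reads `a - 3 + (2g - 2 + d + b)·t = -2`, and `W·f = a + b·t ≥ 0`
since `f ⊄ W`.  Then: if `t = 0` then `a = 1`; if `t ≥ 1` then `b = -a`,
`d = 3` and `g = 0`. -/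
theorem fiber_intersection_numerics (a b d g t : ℤ)
    (ht : 0 ≤ t) (hd : 3 ≤ d) (hg : 0 ≤ g)
    (adjunction : a - 3 + (2 * g - 2 + d + b) * t = -2)
    (Wf_nonneg : 0 ≤ a + b * t) :
    (t = 0 → a = 1) ∧ (1 ≤ t → b = -a ∧ d = 3 ∧ g = 0) :=
  fiber_intersection_numerics_general a b d g t hd hg adjunction Wf_nonneg
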